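/- arXiv:2412.07729 — 4 statements merged into one kernel-verified Lean document; each statement's English description precedes it below -/
import Mathlib

section
/- Consider the semi-naive evaluation of linear transitive closure on a finite directed graph (V,E): δT^0 = E, T^0 = E, and for i ≥ 1, δT^i = {(x,y) : ∃z, (x,z) ∈ δT^{i-1}, (z,y) ∈ E, (x,y) ∉ T^{i-1}} and T^i = T^{i-1} ∪ δT^i. Then the relations δT^0, δT^1, δT^2, … are pairwise disjoint, and their union over all i equals the transitive closure of E. -/
/-!
`T^i` is the union of `δT^0, …, δT^i`, and `δT^{i+1}` avoids `T^i` by construction, so the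
deltas are pairwise disjoint. Each `δT^i` consists of endpoints of `E`-paths of length `i + 1`.
Conversely, if `(x, b) ∈ δT^j` and `E b c`, then `(x, c)` lies in `T^j` or else in `δT^{j+1}`;
so by induction along a path every pair of the transitive closure lies in some `T^i`, hence in
some `δT^j`.
-/

/-- One step of semi-naive evaluation of linear transitive closure:
`semiNaive E i = (δT^i, T^i)`. -/
def semiNaive {V : Type*} (E : V → V → Prop) : ℕ → (V → V → Prop) × (V → V → Prop)
  | 0 => (E, E)
  | i + 1 =>
    let d := (semiNaive E i).1
    let t := (semiNaive E i).2
    let d' := fun x y => (∃ z, d x z ∧ E z y) ∧ ¬ t x y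
    (d', fun x y => t x y ∨ d' x y)

namespace semiNaive

variable {V : Type*} (E : V → V → Prop)

theorem snd_iff_exists_le_fst (i : ℕ) (x y : V) :
    (semiNaive E i).2 x y ↔ ∃ j ≤ i, (semiNaive E j).1 x y := by
  induction i with
  | zero => simp [semiNaive]
  | succ i ih =>
    change (semiNaive E i).2 x y ∨ (semiNaive E (i + 1)).1 x y ↔ _
    simp only [ih, Nat.le_succ_iff, or_and_right, exists_or, exists_eq_left]

variable {E}

theorem not_fst_of_lt {i j : ℕ} (hij : i < j) {x y : V} (hi : (semiNaive E i).1 x y) :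
    ¬ (semiNaive E j).1 x y := by
  obtain ⟨k, rfl⟩ := Nat.exists_eq_add_of_lt hij
  exact fun hj => hj.2 ((snd_iff_exists_le_fst E _ x y).2 ⟨i, by omega, hi⟩)

theorem transGen_of_fst {i : ℕ} {x y : V} (h : (semiNaive E i).1 x y) :
    Relation.TransGen E x y := by
  induction i generalizing y with
  | zero => exact .single h
  | succ i ih =>
    obtain ⟨⟨z, hz, hzy⟩, -⟩ := h
    exact (ih hz).tail hzy

theorem exists_snd_of_transGen {x y : V} (h : Relation.TransGen E x y) :
    ∃ i, (semiNaive E i).2 x y := by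
  induction h with
  | single hxy => exact ⟨0, hxy⟩
  | @tail b c _ hbc ih =>
    obtain ⟨i, hi⟩ := ih
    obtain ⟨j, -, hj⟩ := (snd_iff_exists_le_fst E i x b).1 hi
    by_cases hc : (semiNaive E j).2 x c
    · exact ⟨j, hc⟩
    · exact ⟨j + 1, Or.inr ⟨⟨b, hj, hbc⟩, hc⟩⟩

theorem exists_fst_iff_transGen (x y : V) :
    (∃ i, (semiNaive E i).1 x y) ↔ Relation.TransGen E x y := by
  refine ⟨fun ⟨_, h⟩ => transGen_of_fst h, fun h => ?_⟩
  obtain ⟨i, hi⟩ := exists_snd_of_transGen h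
  obtain ⟨j, -, hj⟩ := (snd_iff_exists_le_fst E i x y).1 hi
  exact ⟨j, hj⟩

end semiNaive

theorem stmt_8_general {V : Type*} (E : V → V → Prop) :
    (∀ i j : ℕ, i ≠ j → ∀ x y : V,
      ¬ ((semiNaive E i).1 x y ∧ (semiNaive E j).1 x y)) ∧
    (∀ x y : V, (∃ i : ℕ, (semiNaive E i).1 x y) ↔ Relation.TransGen E x y) := by
  refine ⟨fun i j hij x y ⟨hi, hj⟩ => ?_, semiNaive.exists_fst_iff_transGen⟩
  rcases hij.lt_or_gt with hlt | hgt
  · exact semiNaive.not_fst_of_lt hlt hi hj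
  · exact semiNaive.not_fst_of_lt hgt hj hi

theorem stmt_8 {V : Type*} [Fintype V] (E : V → V → Prop) :
    (∀ i j : ℕ, i ≠ j → ∀ x y : V,
      ¬ ((semiNaive E i).1 x y ∧ (semiNaive E j).1 x y)) ∧
    (∀ x y : V, (∃ i : ℕ, (semiNaive E i).1 x y) ↔ Relation.TransGen E x y) :=
  stmt_8_general E
end

section
/- Let E be a binary relation on a finite set V and T its transitive closure. Then Σ_{(x,z) ∈ T} |{y : (z,y) ∈ E}| ≤ |T| · √|E|, where |T| and |E| denote the cardinalities of the relations. -/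
theorem stmt_10 {V : Type*} [DecidableEq V] (E T : Finset (V × V))
    -- `T` is the transitive closure of `E`:
    (hT : ∀ p : V × V, p ∈ T ↔ Relation.TransGen (fun a b => (a, b) ∈ E) p.1 p.2) :
    (∑ p ∈ T, ((E.filter (fun q => q.1 = p.2)).card : ℝ)) ≤
      (T.card : ℝ) * Real.sqrt (E.card : ℝ) := by
  classical
  set d : V → ℕ := fun z => (E.filter (fun q => q.1 = z)).card with hd
  -- Step 1: for (x,z) ∈ T, d z ≤ out-degree of x in T
  have key : ∀ x z : V, (x, z) ∈ T → d z ≤ (T.filter (fun p => p.1 = x)).card := by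
    intro x z hxz
    apply Finset.card_le_card_of_injOn (fun q => (x, q.2))
    · intro q hq
      simp only [Finset.mem_coe, Finset.mem_filter] at hq
      refine Finset.mem_filter.2 ⟨?_, rfl⟩
      rw [hT]
      refine ((hT _).1 hxz).tail ?_
      have : (q.1, q.2) ∈ E := by simpa using hq.1
      rwa [hq.2] at this
    · intro a ha b hb hab
      simp only [Finset.coe_filter, Set.mem_setOf_eq] at ha hb
      have h2 : a.2 = b.2 := by simpa using congrArg Prod.snd hab
      exact Prod.ext (ha.2.trans hb.2.symm) h2
  -- Step 2: for each x, the fiberwise sum of d is at most |E|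
  have key2 : ∀ x : V, (∑ p ∈ T.filter (fun p => p.1 = x), d p.2) ≤ E.card := by
    intro x
    have hinj : ∀ a ∈ T.filter (fun p => p.1 = x), ∀ b ∈ T.filter (fun p => p.1 = x),
        a.2 = b.2 → a = b := by
      intro a ha b hb h2
      simp only [Finset.mem_filter] at ha hb
      exact Prod.ext (ha.2.trans hb.2.symm) h2
    rw [← Finset.sum_image (f := d) (g := Prod.snd) hinj]
    set s := (T.filter (fun p => p.1 = x)).image Prod.snd
    have hdisj : ∀ z₁ ∈ s, ∀ z₂ ∈ s, z₁ ≠ z₂ →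
        Disjoint (E.filter (fun q => q.1 = z₁)) (E.filter (fun q => q.1 = z₂)) := by
      intro z₁ _ z₂ _ hne
      refine Finset.disjoint_left.2 ?_
      intro q hq1 hq2
      simp only [Finset.mem_filter] at hq1 hq2
      exact hne (hq1.2.symm.trans hq2.2)
    calc (∑ z ∈ s, d z) = (s.biUnion (fun z => E.filter (fun q => q.1 = z))).card :=
          (Finset.card_biUnion hdisj).symm
      _ ≤ E.card := by
          apply Finset.card_le_card
          intro q hq
          simp only [Finset.mem_biUnion, Finset.mem_filter] at hq
          obtain ⟨z, _, hq, _⟩ := hq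
          exact hq
  -- Step 3: per-fiber real bound via Cauchy–Schwarz
  have key3 : ∀ x : V, (∑ p ∈ T.filter (fun p => p.1 = x), (d p.2 : ℝ)) ≤
      ((T.filter (fun p => p.1 = x)).card : ℝ) * Real.sqrt (E.card : ℝ) := by
    intro x
    set F := T.filter (fun p => p.1 = x) with hF
    set S : ℝ := ∑ p ∈ F, (d p.2 : ℝ) with hS
    have hS0 : 0 ≤ S := Finset.sum_nonneg fun p _ => by positivity
    have hsq : S ^ 2 ≤ (F.card : ℝ) ^ 2 * (E.card : ℝ) := by
      have h1 : S ^ 2 ≤ (F.card : ℝ) * ∑ p ∈ F, (d p.2 : ℝ) ^ 2 :=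
        sq_sum_le_card_mul_sum_sq
      have h2 : (∑ p ∈ F, (d p.2 : ℝ) ^ 2) ≤ (F.card : ℝ) * S := by
        rw [hS, Finset.mul_sum]
        apply Finset.sum_le_sum
        intro p hp
        have hpT : (x, p.2) ∈ T := by
          simp only [hF, Finset.mem_filter] at hp
          rw [← hp.2]
          exact hp.1
        have := key x p.2 hpT
        rw [sq]
        have hcast : (d p.2 : ℝ) ≤ (F.card : ℝ) := by exact_mod_cast this
        exact mul_le_mul_of_nonneg_right hcast (by positivity)
      have h3 : S ≤ (E.card : ℝ) := by
        rw [hS, ← Nat.cast_sum]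
        exact_mod_cast key2 x
      calc S ^ 2 ≤ (F.card : ℝ) * ((F.card : ℝ) * S) :=
            h1.trans (mul_le_mul_of_nonneg_left h2 (by positivity))
        _ = (F.card : ℝ) ^ 2 * S := by ring
        _ ≤ (F.card : ℝ) ^ 2 * (E.card : ℝ) :=
            mul_le_mul_of_nonneg_left h3 (by positivity)
    have : S = Real.sqrt (S ^ 2) := (Real.sqrt_sq hS0).symm
    rw [this]
    calc Real.sqrt (S ^ 2) ≤ Real.sqrt ((F.card : ℝ) ^ 2 * (E.card : ℝ)) :=
          Real.sqrt_le_sqrt hsq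
      _ = (F.card : ℝ) * Real.sqrt (E.card : ℝ) := by
          rw [Real.sqrt_mul (sq_nonneg (F.card : ℝ)), Real.sqrt_sq (Nat.cast_nonneg F.card)]
  -- Combine
  have hfib : (∑ p ∈ T, (d p.2 : ℝ)) =
      ∑ x ∈ T.image Prod.fst, ∑ p ∈ T.filter (fun p => p.1 = x), (d p.2 : ℝ) :=
    (Finset.sum_fiberwise_of_maps_to (fun p hp => Finset.mem_image_of_mem Prod.fst hp) _).symm
  calc (∑ p ∈ T, (d p.2 : ℝ))
      = ∑ x ∈ T.image Prod.fst, ∑ p ∈ T.filter (fun p => p.1 = x), (d p.2 : ℝ) := hfib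
    _ ≤ ∑ x ∈ T.image Prod.fst, ((T.filter (fun p => p.1 = x)).card : ℝ) *
          Real.sqrt (E.card : ℝ) := Finset.sum_le_sum fun x _ => key3 x
    _ = (∑ x ∈ T.image Prod.fst, ((T.filter (fun p => p.1 = x)).card : ℝ)) *
          Real.sqrt (E.card : ℝ) := by rw [← Finset.sum_mul]
    _ = (T.card : ℝ) * Real.sqrt (E.card : ℝ) := by
          congr 1
          rw [← Nat.cast_sum]
          congr 1
          exact (Finset.card_eq_sum_card_fiberwise fun p hp =>
            Finset.mem_image_of_mem Prod.fst hp).symm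
end

section
/- (Query Decomposition Lemma, triangle instance) Let R(X,Z), S(Z,Y), T(X,Y) be finite binary relations. Then Σ_{(x,z)} |σ_{X=x,Z=z} R|^{1/2} · |σ_{Z=z} S|^{1/2} · |σ_{X=x} T|^{1/2} ≤ |R|^{1/2} · |S|^{1/2} · |T|^{1/2}, where σ denotes selection (so |σ_{X=x,Z=z}R| ∈ {0,1}, |σ_{Z=z}S| is the number of y with (z,y) ∈ S, and |σ_{X=x}T| is the number of y with (x,y) ∈ T), and the outer sum ranges over all pairs (x,z). -/
/-! One Cauchy–Schwarz step, pairing `√f(x,z)` with `√(g z · h x)`: the sum of squares of the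
second factor splits as `(∑ g) · (∑ h)`. For the selection counts, the selections partition each
relation, so the three sums are `|R|`, `|S|` and `|T|`. -/

open Finset

theorem Real.sum_sqrt_mul_sqrt_mul_sqrt_le {α β : Type*} [Fintype α] [Fintype β]
    (f : α × β → ℝ) (g : β → ℝ) (h : α → ℝ) (hf : ∀ p, 0 ≤ f p) (hg : ∀ b, 0 ≤ g b)
    (hh : ∀ a, 0 ≤ h a) :
    ∑ p, √(f p) * √(g p.2) * √(h p.1) ≤ √(∑ p, f p) * √(∑ b, g b) * √(∑ a, h a) :=
  calc ∑ p, √(f p) * √(g p.2) * √(h p.1) = ∑ p, √(f p) * √(g p.2 * h p.1) := by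
        simp_rw [Real.sqrt_mul (hg _), mul_assoc]
    _ ≤ √(∑ p, f p) * √(∑ p : α × β, g p.2 * h p.1) :=
        Real.sum_sqrt_mul_sqrt_le _ hf fun p => mul_nonneg (hg _) (hh _)
    _ = √(∑ p, f p) * √(∑ b, g b) * √(∑ a, h a) := by
        rw [Fintype.sum_prod_type_right (f := fun p : α × β => g p.2 * h p.1),
          ← Fintype.sum_mul_sum, Real.sqrt_mul (sum_nonneg fun b _ => hg b), mul_assoc]

theorem Finset.sum_card_filter_eq_card {ι M : Type*} [Fintype M] [DecidableEq M] (f : ι → M)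
    (s : Finset ι) : ∑ b, #{a ∈ s | f a = b} = #s :=
  (card_eq_sum_card_fiberwise fun _ _ => mem_univ _).symm

theorem stmt_12 {V : Type*} [Fintype V] [DecidableEq V] (R S T : Finset (V × V)) :
    (∑ p : V × V,
        Real.sqrt ((R.filter (fun q => q.1 = p.1 ∧ q.2 = p.2)).card : ℝ) *
        Real.sqrt ((S.filter (fun q => q.1 = p.2)).card : ℝ) *
        Real.sqrt ((T.filter (fun q => q.1 = p.1)).card : ℝ)) ≤
      Real.sqrt (R.card : ℝ) * Real.sqrt (S.card : ℝ) * Real.sqrt (T.card : ℝ) := by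
  have hR : ∑ p : V × V, (#{q ∈ R | q.1 = p.1 ∧ q.2 = p.2} : ℝ) = #R := by
    simp only [← Prod.ext_iff]
    exact_mod_cast sum_card_filter_eq_card id R
  have hS : ∑ z : V, (#{q ∈ S | q.1 = z} : ℝ) = #S := by
    exact_mod_cast sum_card_filter_eq_card Prod.fst S
  have hT : ∑ x : V, (#{q ∈ T | q.1 = x} : ℝ) = #T := by
    exact_mod_cast sum_card_filter_eq_card Prod.fst T
  have cauchy_schwarz := Real.sum_sqrt_mul_sqrt_mul_sqrt_le
    (fun p : V × V => (#{q ∈ R | q.1 = p.1 ∧ q.2 = p.2} : ℝ))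
    (fun z : V => (#{q ∈ S | q.1 = z} : ℝ)) (fun x : V => (#{q ∈ T | q.1 = x} : ℝ))
    (fun _ => Nat.cast_nonneg _) (fun _ => Nat.cast_nonneg _) fun _ => Nat.cast_nonneg _
  rwa [hR, hS, hT] at cauchy_schwarz
end

section
/- Let E be a binary relation on a finite set V with transitive closure T. Then Σ_{(x,z) ∈ T} |{y : (z,y) ∈ T}| ≤ |T|^{3/2}. -/
open Finset Real

theorem stmt_14 {V : Type*} [DecidableEq V] (E T : Finset (V × V))
    -- `T` is the transitive closure of `E`:
    (hT : ∀ p : V × V, p ∈ T ↔ Relation.TransGen (fun a b => (a, b) ∈ E) p.1 p.2) :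
    (∑ p ∈ T, ((T.filter (fun q => q.1 = p.2)).card : ℝ)) ≤
      (T.card : ℝ) ^ ((3 : ℝ) / 2) := by
  classical
  have htrans : ∀ p q : V × V, p ∈ T → q ∈ T → p.2 = q.1 → (p.1, q.2) ∈ T := by
    intro p q hp hq h
    exact (hT _).2 (Relation.TransGen.trans ((hT p).1 hp) (h ▸ (hT q).1 hq))
  set N : ℝ := (T.card : ℝ) with hNdef
  have hN0 : 0 ≤ N := by positivity
  set Z := T.image Prod.snd with hZ
  set a : V → ℝ := fun z => ((T.filter (fun q => q.2 = z)).card : ℝ) with ha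
  set b : V → ℝ := fun z => ((T.filter (fun q => q.1 = z)).card : ℝ) with hb
  have ha0 : ∀ z, 0 ≤ a z := fun z => by positivity
  have hb0 : ∀ z, 0 ≤ b z := fun z => by positivity
  -- key pointwise bound: a z * b z ≤ N
  have key : ∀ z, a z * b z ≤ N := by
    intro z
    have hcard : ((T.filter (fun q => q.2 = z)) ×ˢ (T.filter (fun q => q.1 = z))).card
        ≤ T.card := by
      apply Finset.card_le_card_of_injOn (fun pq => (pq.1.1, pq.2.2))
      · intro pq hpq
        simp only [Finset.mem_coe, Finset.mem_product, Finset.mem_filter] at hpq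
        exact htrans _ _ hpq.1.1 hpq.2.1 (hpq.1.2.trans hpq.2.2.symm)
      · intro pq h1 pq' h2 heq
        obtain ⟨⟨x, z1⟩, z2, y⟩ := pq
        obtain ⟨⟨x', z1'⟩, z2', y'⟩ := pq'
        simp only [Finset.coe_product, Set.mem_prod, Finset.mem_coe,
          Finset.mem_filter] at h1 h2
        simp only [Prod.mk.injEq] at heq ⊢
        exact ⟨⟨heq.1, h1.1.2.trans h2.1.2.symm⟩, h1.2.2.trans h2.2.2.symm, heq.2⟩
    rw [Finset.card_product] at hcard
    calc a z * b z = (((T.filter (fun q => q.2 = z)).card *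
          (T.filter (fun q => q.1 = z)).card : ℕ) : ℝ) := by push_cast [ha, hb]; ring
      _ ≤ N := by rw [hNdef]; exact_mod_cast hcard
  -- rewrite the sum fiberwise
  have hsum : (∑ p ∈ T, ((T.filter (fun q => q.1 = p.2)).card : ℝ))
      = ∑ z ∈ Z, a z * b z := by
    rw [← Finset.sum_fiberwise_of_maps_to (g := Prod.snd) (t := Z)
      (fun p hp => Finset.mem_image_of_mem _ hp)]
    refine Finset.sum_congr rfl fun z _ => ?_
    have : ∀ p ∈ T.filter (fun p => p.2 = z),
        ((T.filter (fun q => q.1 = p.2)).card : ℝ) = b z := by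
      intro p hp
      rw [Finset.mem_filter] at hp
      rw [hp.2]
    rw [Finset.sum_congr rfl this, Finset.sum_const, nsmul_eq_mul]
  -- sum of a over Z equals N
  have hsa : ∑ z ∈ Z, a z = N := by
    have := Finset.sum_fiberwise_of_maps_to (g := Prod.snd) (t := Z)
      (fun p hp => Finset.mem_image_of_mem _ hp) (fun _ => (1 : ℝ))
    simp only [Finset.sum_const, nsmul_eq_mul, mul_one] at this
    exact this
  -- sum of b over Z at most N
  have hsb : ∑ z ∈ Z, b z ≤ N := by
    have hdisj : ∀ x ∈ Z, ∀ y ∈ Z, x ≠ y →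
        Disjoint (T.filter (fun q => q.1 = x)) (T.filter (fun q => q.1 = y)) := by
      intro x _ y _ hxy
      refine Finset.disjoint_left.2 fun p hp hq => ?_
      rw [Finset.mem_filter] at hp hq
      exact hxy (hp.2.symm.trans hq.2)
    have hcsum : (Z.biUnion fun z => T.filter (fun q => q.1 = z)).card
        = ∑ z ∈ Z, (T.filter (fun q => q.1 = z)).card := Finset.card_biUnion hdisj
    have hsub : (Z.biUnion fun z => T.filter (fun q => q.1 = z)) ⊆ T := by
      intro p hp
      rcases Finset.mem_biUnion.1 hp with ⟨z, _, hz⟩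
      exact (Finset.mem_filter.1 hz).1
    have : ∑ z ∈ Z, (T.filter (fun q => q.1 = z)).card ≤ T.card := by
      rw [← hcsum]; exact Finset.card_le_card hsub
    calc ∑ z ∈ Z, b z = ((∑ z ∈ Z, (T.filter (fun q => q.1 = z)).card : ℕ) : ℝ) := by
          push_cast [hb]; rfl
      _ ≤ N := by rw [hNdef]; exact_mod_cast this
  rw [hsum]
  have step1 : ∑ z ∈ Z, a z * b z ≤ Real.sqrt N * ∑ z ∈ Z, Real.sqrt (a z) * Real.sqrt (b z) := by
    rw [Finset.mul_sum]
    refine Finset.sum_le_sum fun z _ => ?_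
    have h1 : a z * b z = (Real.sqrt (a z) * Real.sqrt (b z)) * (Real.sqrt (a z) * Real.sqrt (b z)) := by
      rw [mul_mul_mul_comm, Real.mul_self_sqrt (ha0 z), Real.mul_self_sqrt (hb0 z)]
    rw [h1]
    have h2 : Real.sqrt (a z) * Real.sqrt (b z) ≤ Real.sqrt N := by
      rw [← Real.sqrt_mul (ha0 z)]
      exact Real.sqrt_le_sqrt (key z)
    exact mul_le_mul_of_nonneg_right h2 (by positivity)
  have step2 : ∑ z ∈ Z, Real.sqrt (a z) * Real.sqrt (b z) ≤ Real.sqrt N * Real.sqrt N := by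
    have hcs := Finset.sum_mul_sq_le_sq_mul_sq Z (fun z => Real.sqrt (a z)) (fun z => Real.sqrt (b z))
    simp only [Real.sq_sqrt (ha0 _), Real.sq_sqrt (hb0 _)] at hcs
    have hS0 : 0 ≤ ∑ z ∈ Z, Real.sqrt (a z) * Real.sqrt (b z) :=
      Finset.sum_nonneg fun z _ => by positivity
    calc ∑ z ∈ Z, Real.sqrt (a z) * Real.sqrt (b z)
        = Real.sqrt ((∑ z ∈ Z, Real.sqrt (a z) * Real.sqrt (b z)) ^ 2) :=
          (Real.sqrt_sq hS0).symm
      _ ≤ Real.sqrt ((∑ z ∈ Z, a z) * ∑ z ∈ Z, b z) := Real.sqrt_le_sqrt hcs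
      _ ≤ Real.sqrt (N * N) := by
          apply Real.sqrt_le_sqrt
          have hb0' : 0 ≤ ∑ z ∈ Z, b z := Finset.sum_nonneg fun z _ => hb0 z
          calc (∑ z ∈ Z, a z) * ∑ z ∈ Z, b z = N * ∑ z ∈ Z, b z := by rw [hsa]
            _ ≤ N * N := mul_le_mul_of_nonneg_left hsb hN0
      _ = Real.sqrt N * Real.sqrt N := by rw [Real.sqrt_mul hN0]
  have hrpow : N ^ ((3:ℝ)/2) = Real.sqrt N ^ (3:ℕ) := by
    rw [Real.sqrt_eq_rpow, ← Real.rpow_natCast (N ^ ((1:ℝ)/2)) 3, ← Real.rpow_mul hN0]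
    norm_num
  calc ∑ z ∈ Z, a z * b z
      ≤ Real.sqrt N * ∑ z ∈ Z, Real.sqrt (a z) * Real.sqrt (b z) := step1
    _ ≤ Real.sqrt N * (Real.sqrt N * Real.sqrt N) :=
        mul_le_mul_of_nonneg_left step2 (Real.sqrt_nonneg N)
    _ = N ^ ((3:ℝ)/2) := by rw [hrpow]; ring
end
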